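/- arXiv:2202.01402 — 3 statements merged into one kernel-verified Lean document; each statement's English description precedes it below -/
import Mathlib

section
/- Consider the bisection procedure run on a separable region of uncertainty containing n_ID in-distribution examples followed by n_OOD out-of-distribution examples. Assume n_ID + n_OOD ≥ 2^{z+2} − 1 for some integer z ≥ 1 and that the examples labeled in the first z bisection steps are all from class OOD. Then at least n' ≥ 3 examples remain in the region of uncertainty, and if n_ID is distributed uniformly on {1, ..., n'−1}, then E[m_ID]/E[m_OOD] ≥ (½·log₂ n') / (z + ½·log₂ n'), where the expectations are with respect to this uniform distribution and the internal randomness of the bisection procedure. -/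
/-!
Model: the (separable) region of uncertainty consists of examples sorted by
confidence score.  A region is represented as the half-open interval of
positions `[lo, hi)`; position `p` is in-distribution (ID) iff `p ≤ t` where
`t` is the cut/threshold (so ID examples come first, then OOD examples).

The bisection procedure on a region of `m = hi - lo` examples queries the
example ranked `i` in the region, where `i = ⌊m/2⌋ + 1` or `i = ⌈m/2⌉` with
equal probability (positions `lo + m/2` and `lo + (m-1)/2` respectively); on
observing label ID it recurses on the examples strictly above the query, on
observing OOD on the examples strictly below, and it stops on an empty region.

`bisectE lab lo hi` is the pair of *expected* numbers of queried examples
labeled ID resp. OOD (expectation over the internal fair coin flips).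
-/
noncomputable def bisectE (lab : ℕ → Bool) (lo hi : ℕ) : ℝ × ℝ :=
  if h : hi ≤ lo then (0, 0)
  else
    let p1 := lo + (hi - lo) / 2
    let p2 := lo + (hi - lo - 1) / 2
    let r1 :=
      if lab p1 then
        ((bisectE lab (p1 + 1) hi).1 + 1, (bisectE lab (p1 + 1) hi).2)
      else
        ((bisectE lab lo p1).1, (bisectE lab lo p1).2 + 1)
    let r2 :=
      if lab p2 then
        ((bisectE lab (p2 + 1) hi).1 + 1, (bisectE lab (p2 + 1) hi).2)
      else
        ((bisectE lab lo p2).1, (bisectE lab lo p2).2 + 1)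
    ((r1.1 + r2.1) / 2, (r1.2 + r2.2) / 2)
termination_by hi - lo
decreasing_by all_goals omega

private lemma bisectE_empty (lab : ℕ → Bool) {lo hi : ℕ} (h : hi ≤ lo) :
    bisectE lab lo hi = (0, 0) := by
  rw [bisectE]; simp [h]

private lemma bisectE_step (lab : ℕ → Bool) {lo hi : ℕ} (h : lo < hi) :
    bisectE lab lo hi =
      (let p1 := lo + (hi - lo) / 2
       let p2 := lo + (hi - lo - 1) / 2
       let r1 :=
         if lab p1 then
           ((bisectE lab (p1 + 1) hi).1 + 1, (bisectE lab (p1 + 1) hi).2)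
         else
           ((bisectE lab lo p1).1, (bisectE lab lo p1).2 + 1)
       let r2 :=
         if lab p2 then
           ((bisectE lab (p2 + 1) hi).1 + 1, (bisectE lab (p2 + 1) hi).2)
         else
           ((bisectE lab lo p2).1, (bisectE lab lo p2).2 + 1)
       ((r1.1 + r2.1) / 2, (r1.2 + r2.2) / 2)) := by
  rw [bisectE, dif_neg (by omega)]

private lemma mul_logb_midpoint {x y : ℝ} (hx : 0 ≤ x) (hy : 0 ≤ y) :
    (x + y) * Real.logb 2 ((x + y) / 2) ≤ x * Real.logb 2 x + y * Real.logb 2 y := by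
  have h := Real.convexOn_mul_log.2 (Set.mem_Ici.mpr hx) (Set.mem_Ici.mpr hy)
      (by norm_num : (0:ℝ) ≤ 1/2) (by norm_num : (0:ℝ) ≤ 1/2) (by norm_num)
  simp only [smul_eq_mul] at h
  have hxy : (1/2 : ℝ) * x + (1/2 : ℝ) * y = (x + y) / 2 := by ring
  rw [hxy] at h
  have h2 : (0:ℝ) < Real.log 2 := Real.log_pos one_lt_two
  have key : (x + y) * Real.log ((x + y) / 2) ≤ x * Real.log x + y * Real.log y := by
    nlinarith [h]
  simp only [Real.logb]
  rw [← mul_div_assoc, ← mul_div_assoc, ← mul_div_assoc, ← add_div]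
  exact (div_le_div_iff_of_pos_right h2).mpr key

private lemma kraft : ∀ n lo hi, hi - lo ≤ n → 1 ≤ lo → lo ≤ hi →
    (((hi - lo : ℕ) : ℝ) + 1) * Real.logb 2 (((hi - lo : ℕ) : ℝ) + 1) ≤
      ∑ t ∈ Finset.Ico (lo - 1) hi,
        ((bisectE (fun p => decide (p ≤ t)) lo hi).1 +
         (bisectE (fun p => decide (p ≤ t)) lo hi).2) := by
  intro n
  induction n using Nat.strong_induction_on with
  | _ n ih =>
  intro lo hi hn hlo hlohi
  rcases eq_or_lt_of_le hlohi with heq | hlt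
  · have hterm : ∀ t, bisectE (fun p => decide (p ≤ t)) lo hi = (0, 0) :=
      fun t => bisectE_empty _ (by omega)
    have hz : hi - lo = 0 := by omega
    simp [hterm, hz]
  · have hsplitsum : ∀ (f g : ℕ → ℝ) (p : ℕ), lo ≤ p → p < hi →
        ∑ t ∈ Finset.Ico (lo - 1) hi, (if p ≤ t then f t else g t)
          = (∑ t ∈ Finset.Ico (lo - 1) p, g t) + ∑ t ∈ Finset.Ico p hi, f t := by
      intro f g p hplo hphi
      rw [← Finset.sum_Ico_consecutive _ (by omega : lo - 1 ≤ p) (by omega : p ≤ hi)]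
      congr 1
      · refine Finset.sum_congr rfl fun t ht => ?_
        simp only [Finset.mem_Ico] at ht
        rw [if_neg (by omega)]
      · refine Finset.sum_congr rfl fun t ht => ?_
        simp only [Finset.mem_Ico] at ht
        rw [if_pos (by omega)]
    set m := hi - lo with hm
    set p1 := lo + m / 2 with hp1
    set p2 := lo + (m - 1) / 2 with hp2
    have point : ∀ t,
        (bisectE (fun p => decide (p ≤ t)) lo hi).1 +
        (bisectE (fun p => decide (p ≤ t)) lo hi).2 =
        ((if p1 ≤ t then
            1 + ((bisectE (fun p => decide (p ≤ t)) (p1 + 1) hi).1 +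
                 (bisectE (fun p => decide (p ≤ t)) (p1 + 1) hi).2)
          else
            1 + ((bisectE (fun p => decide (p ≤ t)) lo p1).1 +
                 (bisectE (fun p => decide (p ≤ t)) lo p1).2)) +
         (if p2 ≤ t then
            1 + ((bisectE (fun p => decide (p ≤ t)) (p2 + 1) hi).1 +
                 (bisectE (fun p => decide (p ≤ t)) (p2 + 1) hi).2)
          else
            1 + ((bisectE (fun p => decide (p ≤ t)) lo p2).1 +
                 (bisectE (fun p => decide (p ≤ t)) lo p2).2))) / 2 := by
      intro t
      rw [bisectE_step _ hlt]
      simp only [decide_eq_true_eq]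
      split_ifs <;> ring
    rw [Finset.sum_congr rfl fun t _ => point t]
    rw [← Finset.sum_div, Finset.sum_add_distrib]
    rw [hsplitsum _ _ p1 (by omega) (by omega), hsplitsum _ _ p2 (by omega) (by omega)]
    have expand : ∀ (s : Finset ℕ) (f : ℕ → ℝ),
        ∑ t ∈ s, (1 + f t) = (s.card : ℝ) + ∑ t ∈ s, f t := by
      intro s f
      rw [Finset.sum_add_distrib, Finset.sum_const, nsmul_eq_mul, mul_one]
    rw [expand, expand, expand, expand]
    rw [Nat.card_Ico, Nat.card_Ico, Nat.card_Ico, Nat.card_Ico]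
    -- IH instances
    have ihA2 := ih (p1 - lo) (by omega) lo p1 (by omega) hlo (by omega)
    have ihA1 := ih (hi - (p1 + 1)) (by omega) (p1 + 1) hi (by omega) (by omega) (by omega)
    have ihB2 := ih (p2 - lo) (by omega) lo p2 (by omega) hlo (by omega)
    have ihB1 := ih (hi - (p2 + 1)) (by omega) (p2 + 1) hi (by omega) (by omega) (by omega)
    rw [show p1 + 1 - 1 = p1 from by omega] at ihA1
    rw [show p2 + 1 - 1 = p2 from by omega] at ihB1
    -- abbreviations
    set Mr : ℝ := ((m : ℕ) : ℝ) + 1 with hMr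
    have hMpos : (0:ℝ) < Mr := by positivity
    have hhalf : Real.logb 2 (Mr / 2) = Real.logb 2 Mr - 1 := by
      rw [Real.logb_div (by positivity) (by norm_num), Real.logb_self_eq_one one_lt_two]
    -- convexity for the pair (p1)
    have hc1 : Mr * Real.logb 2 Mr - Mr ≤
        (((p1 - lo : ℕ) : ℝ) + 1) * Real.logb 2 (((p1 - lo : ℕ) : ℝ) + 1) +
        (((hi - (p1 + 1) : ℕ) : ℝ) + 1) * Real.logb 2 (((hi - (p1 + 1) : ℕ) : ℝ) + 1) := by
      have hsum : (((p1 - lo : ℕ) : ℝ) + 1) + (((hi - (p1 + 1) : ℕ) : ℝ) + 1) = Mr := by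
        rw [hMr]
        have : (p1 - lo) + 1 + ((hi - (p1 + 1)) + 1) = m + 1 := by omega
        exact_mod_cast congrArg (Nat.cast : ℕ → ℝ) this
      have := mul_logb_midpoint
        (by positivity : (0:ℝ) ≤ ((p1 - lo : ℕ) : ℝ) + 1)
        (by positivity : (0:ℝ) ≤ ((hi - (p1 + 1) : ℕ) : ℝ) + 1)
      rw [hsum, hhalf] at this
      have hexp : Mr * (Real.logb 2 Mr - 1) = Mr * Real.logb 2 Mr - Mr := by ring
      rw [hexp] at this
      linarith
    have hc2 : Mr * Real.logb 2 Mr - Mr ≤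
        (((p2 - lo : ℕ) : ℝ) + 1) * Real.logb 2 (((p2 - lo : ℕ) : ℝ) + 1) +
        (((hi - (p2 + 1) : ℕ) : ℝ) + 1) * Real.logb 2 (((hi - (p2 + 1) : ℕ) : ℝ) + 1) := by
      have hsum : (((p2 - lo : ℕ) : ℝ) + 1) + (((hi - (p2 + 1) : ℕ) : ℝ) + 1) = Mr := by
        rw [hMr]
        have : (p2 - lo) + 1 + ((hi - (p2 + 1)) + 1) = m + 1 := by omega
        exact_mod_cast congrArg (Nat.cast : ℕ → ℝ) this
      have := mul_logb_midpoint
        (by positivity : (0:ℝ) ≤ ((p2 - lo : ℕ) : ℝ) + 1)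
        (by positivity : (0:ℝ) ≤ ((hi - (p2 + 1) : ℕ) : ℝ) + 1)
      rw [hsum, hhalf] at this
      have hexp : Mr * (Real.logb 2 Mr - 1) = Mr * Real.logb 2 Mr - Mr := by ring
      rw [hexp] at this
      linarith
    -- counting: cards
    have hcard1 : ((p1 - (lo - 1) : ℕ) : ℝ) + ((hi - p1 : ℕ) : ℝ) = Mr := by
      rw [hMr]
      have : (p1 - (lo - 1)) + (hi - p1) = m + 1 := by omega
      exact_mod_cast congrArg (Nat.cast : ℕ → ℝ) this
    have hcard2 : ((p2 - (lo - 1) : ℕ) : ℝ) + ((hi - p2 : ℕ) : ℝ) = Mr := by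
      rw [hMr]
      have : (p2 - (lo - 1)) + (hi - p2) = m + 1 := by omega
      exact_mod_cast congrArg (Nat.cast : ℕ → ℝ) this
    have goalx := hcard1
    generalize hSA2 : ∑ t ∈ Finset.Ico (lo - 1) p1,
      ((bisectE (fun p => decide (p ≤ t)) lo p1).1 + (bisectE (fun p => decide (p ≤ t)) lo p1).2) = SA2 at ihA2 ⊢
    generalize hSA1 : ∑ t ∈ Finset.Ico p1 hi,
      ((bisectE (fun p => decide (p ≤ t)) (p1 + 1) hi).1 + (bisectE (fun p => decide (p ≤ t)) (p1 + 1) hi).2) = SA1 at ihA1 ⊢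
    generalize hSB2 : ∑ t ∈ Finset.Ico (lo - 1) p2,
      ((bisectE (fun p => decide (p ≤ t)) lo p2).1 + (bisectE (fun p => decide (p ≤ t)) lo p2).2) = SB2 at ihB2 ⊢
    generalize hSB1 : ∑ t ∈ Finset.Ico p2 hi,
      ((bisectE (fun p => decide (p ≤ t)) (p2 + 1) hi).1 + (bisectE (fun p => decide (p ≤ t)) (p2 + 1) hi).2) = SB1 at ihB1 ⊢
    clear_value m p1 p2 Mr
    linarith [ihA1, ihA2, ihB1, ihB2, hc1, hc2, hcard1, hcard2]

private lemma logb_prod_le {X1 X2 Mr : ℝ} (h1 : 1 ≤ X1) (h2 : 1 ≤ X2) (hMr : 0 ≤ Mr)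
    (hprod : 4 * (X1 * X2) ≤ Mr ^ 2) :
    Real.logb 2 X1 + Real.logb 2 X2 ≤ 2 * Real.logb 2 Mr - 2 := by
  have hM : (0:ℝ) < Mr := by nlinarith [sq_nonneg Mr]
  have hX : (0:ℝ) < X1 * X2 := by nlinarith
  have e1 : Real.logb 2 X1 + Real.logb 2 X2 = Real.logb 2 (X1 * X2) :=
    (Real.logb_mul (by linarith) (by linarith)).symm
  have e2 : Real.logb 2 (X1 * X2) ≤ Real.logb 2 (Mr ^ 2 / 4) :=
    Real.logb_le_logb_of_le one_lt_two hX (by linarith)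
  have e3 : Real.logb 2 (Mr ^ 2 / 4) = 2 * Real.logb 2 Mr - 2 := by
    rw [Real.logb_div (by positivity) (by norm_num), Real.logb_pow]
    have h4 : (4:ℝ) = 2 ^ 2 := by norm_num
    rw [h4, Real.logb_pow, Real.logb_self_eq_one one_lt_two]
    push_cast; ring
  linarith

private lemma extreme : ∀ n lo hi, hi - lo ≤ n → 1 ≤ lo →
    ((bisectE (fun p => decide (p ≤ lo - 1)) lo hi).1 +
        (bisectE (fun p => decide (p ≤ lo - 1)) lo hi).2 ≤
      Real.logb 2 (((hi - lo : ℕ) : ℝ) + 1)) ∧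
    ((bisectE (fun p => decide (p ≤ hi - 1)) lo hi).1 +
        (bisectE (fun p => decide (p ≤ hi - 1)) lo hi).2 ≤
      Real.logb 2 (((hi - lo : ℕ) : ℝ) + 1)) := by
  intro n
  induction n using Nat.strong_induction_on with
  | _ n ih =>
  intro lo hi hn hlo
  have hlogpos : (0:ℝ) ≤ Real.logb 2 (((hi - lo : ℕ) : ℝ) + 1) :=
    Real.logb_nonneg one_lt_two (by linarith [(Nat.cast_nonneg (α := ℝ)) (hi - lo)])
  by_cases hle : hi ≤ lo
  · have h0 : ∀ t, bisectE (fun p => decide (p ≤ t)) lo hi = (0, 0) :=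
      fun t => bisectE_empty _ hle
    rw [h0, h0]
    constructor <;> simpa using hlogpos
  · push_neg at hle
    set m := hi - lo with hm
    set p1 := lo + m / 2 with hp1
    set p2 := lo + (m - 1) / 2 with hp2
    constructor
    · -- all OOD : t = lo - 1
      rw [bisectE_step _ hle]
      simp only [decide_eq_true_eq]
      rw [if_neg (by omega), if_neg (by omega)]
      have i1 := (ih (p1 - lo) (by omega) lo p1 (by omega) hlo).1
      have i2 := (ih (p2 - lo) (by omega) lo p2 (by omega) hlo).1
      have hprod : 4 * (((((p1 - lo : ℕ) : ℝ)) + 1) * ((((p2 - lo : ℕ) : ℝ)) + 1)) ≤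
          (((m : ℕ) : ℝ) + 1) ^ 2 := by
        obtain ⟨k, hk | hk⟩ := Nat.even_or_odd' m
        · have e1 : p1 - lo + 1 = k + 1 := by omega
          have e2 : p2 - lo + 1 = k := by omega
          have e3 : m + 1 = 2 * k + 1 := by omega
          have c1 : (((p1 - lo : ℕ) : ℝ)) + 1 = (k : ℝ) + 1 := by
            exact_mod_cast congrArg (Nat.cast : ℕ → ℝ) e1
          have c2 : (((p2 - lo : ℕ) : ℝ)) + 1 = (k : ℝ) := by
            exact_mod_cast congrArg (Nat.cast : ℕ → ℝ) e2
          have c3 : ((m : ℕ) : ℝ) + 1 = 2 * (k : ℝ) + 1 := by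
            exact_mod_cast congrArg (Nat.cast : ℕ → ℝ) e3
          rw [c1, c2, c3]; nlinarith [sq_nonneg ((k:ℝ))]
        · have e1 : p1 - lo + 1 = k + 1 := by omega
          have e2 : p2 - lo + 1 = k + 1 := by omega
          have e3 : m + 1 = 2 * k + 2 := by omega
          have c1 : (((p1 - lo : ℕ) : ℝ)) + 1 = (k : ℝ) + 1 := by
            exact_mod_cast congrArg (Nat.cast : ℕ → ℝ) e1
          have c2 : (((p2 - lo : ℕ) : ℝ)) + 1 = (k : ℝ) + 1 := by
            exact_mod_cast congrArg (Nat.cast : ℕ → ℝ) e2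
          have c3 : ((m : ℕ) : ℝ) + 1 = 2 * (k : ℝ) + 2 := by
            exact_mod_cast congrArg (Nat.cast : ℕ → ℝ) e3
          rw [c1, c2, c3]; nlinarith []
      have hlp := logb_prod_le
        (by linarith [(Nat.cast_nonneg (α := ℝ)) (p1 - lo)] : (1:ℝ) ≤ (((p1 - lo : ℕ) : ℝ)) + 1)
        (by linarith [(Nat.cast_nonneg (α := ℝ)) (p2 - lo)] : (1:ℝ) ≤ (((p2 - lo : ℕ) : ℝ)) + 1)
        (by positivity) hprod
      clear_value m p1 p2
      rw [show lo + (hi - lo) / 2 = p1 from by omega,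
          show lo + (hi - lo - 1) / 2 = p2 from by omega]
      linarith [i1, i2, hlp]
    · -- all ID : t = hi - 1
      rw [bisectE_step _ hle]
      simp only [decide_eq_true_eq]
      rw [if_pos (by omega), if_pos (by omega)]
      have i1 := (ih (hi - (p1 + 1)) (by omega) (p1 + 1) hi (by omega) (by omega)).2
      have i2 := (ih (hi - (p2 + 1)) (by omega) (p2 + 1) hi (by omega) (by omega)).2
      have hprod : 4 * (((((hi - (p1 + 1) : ℕ) : ℝ)) + 1) * ((((hi - (p2 + 1) : ℕ) : ℝ)) + 1)) ≤
          (((m : ℕ) : ℝ) + 1) ^ 2 := by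
        obtain ⟨k, hk | hk⟩ := Nat.even_or_odd' m
        · have e1 : hi - (p1 + 1) + 1 = k := by omega
          have e2 : hi - (p2 + 1) + 1 = k + 1 := by omega
          have e3 : m + 1 = 2 * k + 1 := by omega
          have c1 : (((hi - (p1 + 1) : ℕ) : ℝ)) + 1 = (k : ℝ) := by
            exact_mod_cast congrArg (Nat.cast : ℕ → ℝ) e1
          have c2 : (((hi - (p2 + 1) : ℕ) : ℝ)) + 1 = (k : ℝ) + 1 := by
            exact_mod_cast congrArg (Nat.cast : ℕ → ℝ) e2
          have c3 : ((m : ℕ) : ℝ) + 1 = 2 * (k : ℝ) + 1 := by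
            exact_mod_cast congrArg (Nat.cast : ℕ → ℝ) e3
          rw [c1, c2, c3]; nlinarith [sq_nonneg ((k:ℝ))]
        · have e1 : hi - (p1 + 1) + 1 = k + 1 := by omega
          have e2 : hi - (p2 + 1) + 1 = k + 1 := by omega
          have e3 : m + 1 = 2 * k + 2 := by omega
          have c1 : (((hi - (p1 + 1) : ℕ) : ℝ)) + 1 = (k : ℝ) + 1 := by
            exact_mod_cast congrArg (Nat.cast : ℕ → ℝ) e1
          have c2 : (((hi - (p2 + 1) : ℕ) : ℝ)) + 1 = (k : ℝ) + 1 := by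
            exact_mod_cast congrArg (Nat.cast : ℕ → ℝ) e2
          have c3 : ((m : ℕ) : ℝ) + 1 = 2 * (k : ℝ) + 2 := by
            exact_mod_cast congrArg (Nat.cast : ℕ → ℝ) e3
          rw [c1, c2, c3]; nlinarith []
      have hlp := logb_prod_le
        (by linarith [(Nat.cast_nonneg (α := ℝ)) (hi - (p1 + 1))] : (1:ℝ) ≤ (((hi - (p1 + 1) : ℕ) : ℝ)) + 1)
        (by linarith [(Nat.cast_nonneg (α := ℝ)) (hi - (p2 + 1))] : (1:ℝ) ≤ (((hi - (p2 + 1) : ℕ) : ℝ)) + 1)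
        (by positivity) hprod
      clear_value m p1 p2
      rw [show lo + (hi - lo) / 2 = p1 from by omega,
          show lo + (hi - lo - 1) / 2 = p2 from by omega]
      linarith [i1, i2, hlp]
private lemma bisectE_mirror (lab : ℕ → Bool) (M : ℕ) :
    ∀ n a b, b - a ≤ n → b ≤ M + 1 →
      bisectE (fun p => ! lab (M - p)) a b
        = ((bisectE lab (M + 1 - b) (M + 1 - a)).2,
           (bisectE lab (M + 1 - b) (M + 1 - a)).1) := by
  intro n
  induction n using Nat.strong_induction_on with
  | _ n ih =>
  intro a b hba hbM
  by_cases hab : b ≤ a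
  · rw [bisectE_empty _ hab, bisectE_empty lab (by omega)]
  · push_neg at hab
    have hm : M + 1 - b < M + 1 - a := by omega
    rw [bisectE_step _ hab, bisectE_step lab hm]
    simp only
    have e1 : M - (a + (b - a) / 2) =
        (M + 1 - b) + ((M + 1 - a) - (M + 1 - b) - 1) / 2 := by omega
    have e2 : M - (a + (b - a - 1) / 2) =
        (M + 1 - b) + ((M + 1 - a) - (M + 1 - b)) / 2 := by omega
    rw [e1, e2]
    have i1 := ih (b - (a + (b - a) / 2 + 1)) (by omega) (a + (b - a) / 2 + 1) b
      (by omega) (by omega)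
    have i2 := ih ((a + (b - a) / 2) - a) (by omega) a (a + (b - a) / 2)
      (by omega) (by omega)
    have i3 := ih (b - (a + (b - a - 1) / 2 + 1)) (by omega) (a + (b - a - 1) / 2 + 1) b
      (by omega) (by omega)
    have i4 := ih ((a + (b - a - 1) / 2) - a) (by omega) a (a + (b - a - 1) / 2)
      (by omega) (by omega)
    rw [i1, i2, i3, i4]
    have g1 : M + 1 - (a + (b - a) / 2 + 1) =
        (M + 1 - b) + ((M + 1 - a) - (M + 1 - b) - 1) / 2 := by omega
    have g2 : M + 1 - (a + (b - a) / 2) =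
        (M + 1 - b) + ((M + 1 - a) - (M + 1 - b) - 1) / 2 + 1 := by omega
    have g3 : M + 1 - (a + (b - a - 1) / 2 + 1) =
        (M + 1 - b) + ((M + 1 - a) - (M + 1 - b)) / 2 := by omega
    have g4 : M + 1 - (a + (b - a - 1) / 2) =
        (M + 1 - b) + ((M + 1 - a) - (M + 1 - b)) / 2 + 1 := by omega
    rw [g1, g2, g3, g4]
    cases h1 : lab ((M + 1 - b) + ((M + 1 - a) - (M + 1 - b)) / 2) <;>
      cases h2 : lab ((M + 1 - b) + ((M + 1 - a) - (M + 1 - b) - 1) / 2) <;>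
        simp [h1, h2, Prod.ext_iff] <;> constructor <;> ring

/-- Expected number of ID-labeled queries made by the bisection procedure on a
separable region of `n'` examples (positions `1, …, n'`, i.e. `[1, n'+1)`)
whose cut `n_ID` is uniformly distributed on `{1, …, n'-1}`. -/
noncomputable def expID (n' : ℕ) : ℝ :=
  (∑ t ∈ Finset.Icc 1 (n' - 1),
      (bisectE (fun p => decide (p ≤ t)) 1 (n' + 1)).1) / ((n' : ℝ) - 1)

/-- Expected number of OOD-labeled queries, in the same model. -/
noncomputable def expOOD (n' : ℕ) : ℝ :=
  (∑ t ∈ Finset.Icc 1 (n' - 1),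
      (bisectE (fun p => decide (p ≤ t)) 1 (n' + 1)).2) / ((n' : ℝ) - 1)

/-- **Sample balancedness of bisection** (Theorem 5.3 / `stmt 0`).
The region of uncertainty initially has `n_ID + n_OOD ≥ 2^(z+2) - 1` examples
(`sz 0`), and the first `z` bisection steps all return label OOD; one such
step shrinks a region of `m` examples to one of `⌊m/2⌋` or `⌈m/2⌉ - 1`
examples (`hstep`), so `sz z = n'` is the number of remaining examples.
Then `n' ≥ 3` and, with `n_ID ~ Unif{1, …, n'-1}` on the remaining region,
the expected query counts `E[m_ID] = expID n'` and
`E[m_OOD] = z + expOOD n'` (the `z` initial queries were all OOD) satisfy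
`E[m_ID]/E[m_OOD] ≥ (½ log₂ n') / (z + ½ log₂ n')`. -/
theorem stmt0 (nID nOOD z : ℕ) (hz : 1 ≤ z)
    (hn : 2 ^ (z + 2) - 1 ≤ nID + nOOD)
    (sz : ℕ → ℕ) (h0 : sz 0 = nID + nOOD)
    (hstep : ∀ k < z, sz (k + 1) = sz k / 2 ∨ sz (k + 1) = (sz k + 1) / 2 - 1) :
    3 ≤ sz z ∧
      (Real.logb 2 (sz z) / 2) / ((z : ℝ) + Real.logb 2 (sz z) / 2) ≤
        expID (sz z) / ((z : ℝ) + expOOD (sz z)) := by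
  have hszge : ∀ k, k ≤ z → 2 ^ (z + 2 - k) - 1 ≤ sz k := by
    intro k
    induction k with
    | zero => intro _; simpa [h0] using hn
    | succ k ihk =>
      intro hk1
      have hk : k < z := by omega
      have hle := ihk (by omega)
      have hpow : 2 ^ (z + 2 - k) = 2 * 2 ^ (z + 2 - (k + 1)) := by
        rw [show z + 2 - k = (z + 2 - (k + 1)) + 1 from by omega, pow_succ]
        ring
      rcases hstep k hk with h | h <;> omega
  have hN3 : 3 ≤ sz z := by
    have h1 := hszge z le_rfl
    have h4 : 2 ^ (z + 2 - z) = 4 := by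
      rw [show z + 2 - z = 2 from by omega]; norm_num
    omega
  refine ⟨hN3, ?_⟩
  set N := sz z with hNdef
  clear_value N
  -- symmetry : the OOD sum equals the ID sum
  have hmirr : ∀ t ∈ Finset.Icc 1 (N - 1),
      (bisectE (fun p => decide (p ≤ t)) 1 (N + 1)).2
        = (bisectE (fun p => decide (p ≤ N - t)) 1 (N + 1)).1 := by
    intro t ht
    simp only [Finset.mem_Icc] at ht
    have hmir := bisectE_mirror (fun q => decide (q ≤ N - t)) (N + 1)
        (N + 1 - 1) 1 (N + 1) (by omega) (by omega)
    have hfun : (fun p => ! (fun q => decide (q ≤ N - t)) ((N + 1) - p))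
        = (fun p => decide (p ≤ t)) := by
      funext p
      simp only [← decide_not]
      exact decide_eq_decide.mpr (by omega)
    rw [hfun] at hmir
    rw [hmir]
    rw [show N + 1 + 1 - (N + 1) = 1 from by omega,
        show N + 1 + 1 - 1 = N + 1 from by omega]
  have hsum2 : ∑ t ∈ Finset.Icc 1 (N - 1), (bisectE (fun p => decide (p ≤ t)) 1 (N + 1)).2
      = ∑ t ∈ Finset.Icc 1 (N - 1), (bisectE (fun p => decide (p ≤ t)) 1 (N + 1)).1 := by
    rw [Finset.sum_congr rfl hmirr]
    exact Finset.sum_nbij' (fun t => N - t) (fun t => N - t)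
      (fun a ha => by simp only [Finset.mem_Icc] at *; omega)
      (fun a ha => by simp only [Finset.mem_Icc] at *; omega)
      (fun a ha => by
        simp only [Finset.mem_Icc] at ha; show N - (N - a) = a; omega)
      (fun a ha => by
        simp only [Finset.mem_Icc] at ha; show N - (N - a) = a; omega)
      (fun a ha => rfl)
  -- Kraft bound
  have hkr := kraft N 1 (N + 1) (by omega) le_rfl (by omega)
  simp only [Nat.add_sub_cancel, Nat.sub_self] at hkr
  have hext := extreme N 1 (N + 1) (by omega) le_rfl
  simp only [Nat.add_sub_cancel, Nat.sub_self] at hext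
  have hset : Finset.Ico 0 (N + 1) = insert 0 (insert N (Finset.Icc 1 (N - 1))) := by
    ext x
    simp only [Finset.mem_Ico, Finset.mem_insert, Finset.mem_Icc]
    omega
  have h0notin : (0 : ℕ) ∉ insert N (Finset.Icc 1 (N - 1)) := by
    simp only [Finset.mem_insert, Finset.mem_Icc]
    omega
  have hNnotin : N ∉ Finset.Icc 1 (N - 1) := by
    simp only [Finset.mem_Icc]
    omega
  rw [hset, Finset.sum_insert h0notin, Finset.sum_insert hNnotin] at hkr
  rw [Finset.sum_add_distrib, hsum2] at hkr
  -- numeric bounds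
  have hNR : (0:ℝ) < (N : ℝ) - 1 := by
    have : (3:ℝ) ≤ (N:ℝ) := by exact_mod_cast hN3
    linarith
  have hL1 : Real.logb 2 ((N:ℝ)) ≤ Real.logb 2 ((N:ℝ) + 1) :=
    Real.logb_le_logb_of_le one_lt_two (by linarith) (by linarith)
  have hL3 : 0 < Real.logb 2 ((N:ℝ)) :=
    Real.logb_pos one_lt_two (by
      have : (3:ℝ) ≤ (N:ℝ) := by exact_mod_cast hN3
      linarith)
  have hIDsum : ((N:ℝ) - 1) * Real.logb 2 ((N:ℝ)) ≤
      2 * ∑ t ∈ Finset.Icc 1 (N - 1), (bisectE (fun p => decide (p ≤ t)) 1 (N + 1)).1 := by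
    nlinarith [hkr, hext.1, hext.2, hL1,
      Real.logb_nonneg one_lt_two (by linarith : (1:ℝ) ≤ (N:ℝ) + 1)]
  have hE : Real.logb 2 ((N:ℝ)) / 2 ≤ expID N := by
    rw [expID, le_div_iff₀ hNR]
    linarith
  have hOE : expOOD N = expID N := by
    rw [expOOD, expID, hsum2]
  rw [hOE]
  have hz1 : (1:ℝ) ≤ (z:ℝ) := by exact_mod_cast hz
  rw [div_le_div_iff₀ (by linarith) (by linarith)]
  nlinarith [mul_nonneg (by linarith : (0:ℝ) ≤ expID N - Real.logb 2 ((N:ℝ)) / 2)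
    (by linarith : (0:ℝ) ≤ (z:ℝ))]
end

section
/- Consider the bisection procedure run on a separable region of uncertainty of n' ≥ 3 examples, consisting of n_ID in-distribution examples followed by n' − n_ID out-of-distribution examples, where n_ID is distributed uniformly on {1, ..., n'−1}. Then, by symmetry of the uniform distribution and of the bisection procedure, the expected number of queried ID examples equals the expected number of queried OOD examples: E[m_ID] = E[m_OOD], where expectations are over the distribution of n_ID and the internal randomness of the procedure. -/
/-- Reflection symmetry of bisection: running the procedure on `[lo, hi)`
with labeling `lab` gives the coordinate-swap of running it on the
reflected interval `[c+1-hi, c+1-lo)` with the mirrored, negated labeling. -/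
lemma bisect_reflect (c : ℕ) (lab lab' : ℕ → Bool)
    (h : ∀ p, lab' (c - p) = ! lab p) :
    ∀ n lo hi, hi - lo ≤ n → hi ≤ c + 1 →
      bisectE lab lo hi =
        ((bisectE lab' (c + 1 - hi) (c + 1 - lo)).2,
         (bisectE lab' (c + 1 - hi) (c + 1 - lo)).1) := by
  intro n
  induction n with
  | zero =>
    intro lo hi h1 h2
    have hle : hi ≤ lo := by omega
    have hle' : c + 1 - lo ≤ c + 1 - hi := by omega
    rw [bisectE, bisectE, dif_pos hle, dif_pos hle']
  | succ n ih =>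
    intro lo hi h1 h2
    by_cases hle : hi ≤ lo
    · have hle' : c + 1 - lo ≤ c + 1 - hi := by omega
      rw [bisectE, bisectE, dif_pos hle, dif_pos hle']
    · have hlt : lo < hi := by omega
      have hle' : ¬ (c + 1 - lo ≤ c + 1 - hi) := by omega
      rw [bisectE, bisectE, dif_neg hle, dif_neg hle']
      simp only []
      set p1 := lo + (hi - lo) / 2 with hp1
      set p2 := lo + (hi - lo - 1) / 2 with hp2
      have e1 : c + 1 - hi + (c + 1 - lo - (c + 1 - hi)) / 2 = c - p2 := by omega
      have e2 : c + 1 - hi + (c + 1 - lo - (c + 1 - hi) - 1) / 2 = c - p1 := by omega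
      rw [e1, e2, h p2, h p1]
      have ihA := ih (p2 + 1) hi (by omega) h2
      have ihB := ih lo p2 (by omega) (by omega)
      have ihC := ih (p1 + 1) hi (by omega) h2
      have ihD := ih lo p1 (by omega) (by omega)
      have rA : c + 1 - (p2 + 1) = c - p2 := by omega
      have rB : c + 1 - p2 = c - p2 + 1 := by omega
      have rC : c + 1 - (p1 + 1) = c - p1 := by omega
      have rD : c + 1 - p1 = c - p1 + 1 := by omega
      rw [rA] at ihA
      rw [rB] at ihB
      rw [rC] at ihC
      rw [rD] at ihD
      cases hl1 : lab p1 <;> cases hl2 : lab p2 <;>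
        simp only [Bool.not_true, Bool.not_false, if_true, if_false,
          ihA, ihB, ihC, ihD] <;>
        · apply Prod.ext <;> simp <;> ring

/-- **Symmetry of bisection** (`stmt 6`): on a separable region of `n' ≥ 3`
examples whose cut `n_ID` is uniform on `{1, …, n'-1}`, the expected number
of ID-labeled queries equals the expected number of OOD-labeled queries
(expectations over `n_ID` and the procedure's internal coin flips). -/
theorem stmt6 (n' : ℕ) (hn' : 3 ≤ n') :
    (∑ t ∈ Finset.Icc 1 (n' - 1),
        (bisectE (fun p => decide (p ≤ t)) 1 (n' + 1)).1) / ((n' : ℝ) - 1) =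
      (∑ t ∈ Finset.Icc 1 (n' - 1),
        (bisectE (fun p => decide (p ≤ t)) 1 (n' + 1)).2) / ((n' : ℝ) - 1) := by
  congr 1
  have key : ∀ t ∈ Finset.Icc 1 (n' - 1),
      (bisectE (fun p => decide (p ≤ t)) 1 (n' + 1)).1 =
      (bisectE (fun p => decide (p ≤ n' - t)) 1 (n' + 1)).2 := by
    intro t ht
    simp only [Finset.mem_Icc] at ht
    have h : ∀ p, (fun q => decide (q ≤ n' - t)) ((n' + 1) - p)
        = ! (fun q => decide (q ≤ t)) p := by
      intro p
      by_cases hp : p ≤ t <;> simp [hp] <;> omega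
    have := bisect_reflect (n' + 1) (fun p => decide (p ≤ t))
      (fun q => decide (q ≤ n' - t)) h (n' + 1) 1 (n' + 1) (by omega) (by omega)
    have e1 : n' + 1 + 1 - (n' + 1) = 1 := by omega
    have e2 : n' + 1 + 1 - 1 = n' + 1 := by omega
    rw [e1, e2] at this
    rw [this]
  rw [Finset.sum_congr rfl key]
  apply Finset.sum_nbij' (i := fun t => n' - t) (j := fun t => n' - t) <;>
    intro a ha <;> simp only [Finset.mem_Icc] at * <;> omega
end

section
/- Let n' ≥ 3 and let U be a random variable distributed uniformly on {1, ..., n'−1}. For any integer B' with 0 ≤ B' < n', it holds that E[min{U, ⌊B'/2⌋}] ≥ ⌊B'/4⌋. -/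
lemma key_sum (N m : ℕ) (hm : m ≤ N) :
    N * (m / 2) ≤ ∑ u ∈ Finset.Icc 1 N, min u m := by
  have hsplit : (∑ u ∈ Finset.Ioc 0 m, min u m) + (∑ u ∈ Finset.Ioc m N, min u m)
      = ∑ u ∈ Finset.Ioc 0 N, min u m :=
    Finset.sum_Ioc_consecutive _ (Nat.zero_le m) hm
  have h1 : (∑ u ∈ Finset.Ioc 0 m, min u m) = ∑ u ∈ Finset.Ioc 0 m, u := by
    apply Finset.sum_congr rfl
    intro u hu
    simp only [Finset.mem_Ioc] at hu
    exact min_eq_left hu.2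
  have h2 : (∑ u ∈ Finset.Ioc m N, min u m) = (N - m) * m := by
    rw [Finset.sum_congr rfl (fun u hu => ?_), Finset.sum_const, Nat.card_Ioc, smul_eq_mul]
    simp only [Finset.mem_Ioc] at hu
    exact min_eq_right (le_of_lt hu.1)
  have hg : (∑ u ∈ Finset.Ioc 0 m, u) * 2 = m * (m + 1) := by
    have hr : ∑ u ∈ Finset.range (m + 1), u = ∑ u ∈ Finset.Ioc 0 m, u := by
      rw [Finset.range_eq_Ico, Finset.Ico_add_one_right_eq_Icc, ← Finset.Ioc_insert_left (Nat.zero_le m),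
        Finset.sum_insert Finset.left_notMem_Ioc, zero_add]
    rw [← hr, Finset.sum_range_id_mul_two, Nat.add_sub_cancel, Nat.mul_comm]
  have hIcc : Finset.Icc 1 N = Finset.Ioc 0 N := by
    ext x; simp [Nat.lt_iff_add_one_le]
  rw [hIcc, ← hsplit, h1, h2]
  obtain ⟨d, rfl⟩ := Nat.exists_eq_add_of_le hm
  have hsub : m + d - m = d := by omega
  rw [hsub]
  have h2k : 2 * (m / 2) ≤ m := by omega
  set S := ∑ u ∈ Finset.Ioc 0 m, u
  nlinarith [Nat.div_le_self m 2]

/-- **`stmt 9`**: for `U` uniform on the integers `{1, …, n'-1}` (with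
`n' ≥ 3`) and any integer `0 ≤ B' < n'`, we have
`E[min{U, ⌊B'/2⌋}] ≥ ⌊B'/4⌋`.  The expectation is written out as the average
of `min u ⌊B'/2⌋` over `u ∈ {1, …, n'-1}` (ℕ-division is floor division). -/
theorem stmt9 (n' B' : ℕ) (hn' : 3 ≤ n') (hB' : B' < n') :
    ((B' / 4 : ℕ) : ℝ) ≤
      (∑ u ∈ Finset.Icc 1 (n' - 1), ((min u (B' / 2) : ℕ) : ℝ)) /
        ((n' : ℝ) - 1) := by
  have hNpos : (0 : ℝ) < (n' : ℝ) - 1 := by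
    have : (3 : ℝ) ≤ (n' : ℝ) := by exact_mod_cast hn'
    linarith
  rw [le_div_iff₀ hNpos]
  have hcast : (n' : ℝ) - 1 = ((n' - 1 : ℕ) : ℝ) := by
    have : 1 ≤ n' := by omega
    push_cast [this]; ring
  rw [hcast, ← Nat.cast_sum, ← Nat.cast_mul]
  have hkey := key_sum (n' - 1) (B' / 2) (by omega)
  have h4 : B' / 4 = (B' / 2) / 2 := by omega
  rw [h4]
  exact_mod_cast (by rw [Nat.mul_comm] at hkey; exact hkey)
end
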